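/- Let $E_1 \subseteq Gr(n, m_1)$ and $E_2 \subseteq Gr(n, m_2)$ be non-degenerate sets of subspaces with $m_1 + m_2 > n$. Then the set $E = \{W_1 \cap W_2 : W_i \in E_i, \dim(W_1 \cap W_2) = m_1 + m_2 - n\}$ is non-degenerate in $Gr(n, m_1 + m_2 - n)$ and satisfies $|E|^n \geq \max\{|E_1|, |E_2|\}$. -/

import Mathlib

/-!
Write `d = m₁ + m₂ - n`. Given `T` of codimension `d`, pick `V₁ ≤ T` of codimension `m₁` and
`W₁ ∈ E₁` with `W₁ ⊓ V₁ = ⊥`; then `dim (W₁ ⊓ T) ≤ n - m₂`, so `W₁ ⊓ T` lies in some `S ≤ W₁` of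
dimension `n - m₂`. Any `W₂ ∈ E₂` with `W₂ ⊓ S = ⊥` makes `W₁ ⊓ W₂` a complement of `S` in `W₁`:
it has dimension `d` and meets `T` trivially.

For the count, every `W₁ ∈ E₁` is the sum of the `d`-dimensional intersections `W₁ ⊓ W₂` it
contains: a proper subspace of `W₁` lies in a hyperplane `H`, and the complement in `W₁` of an
`S ≤ H` is not contained in `H`. Hence `W₁` is the sum of `m₁` members of `E`, and recording them
injects `E₁` into `E^{m₁}`; finally `m₁ ≤ n`.
-/

open Module Submodule

theorem Set.ncard_le_ncard_pow_of_forall_exists_iSup_eq {α : Type*} [SupSet α] {A B : Set α}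
    (hB : B.Finite) {k : ℕ} (h : ∀ a ∈ A, ∃ f : Fin k → α, (∀ i, f i ∈ B) ∧ ⨆ i, f i = a) :
    A.ncard ≤ B.ncard ^ k := by
  choose f hfB hf using h
  have : Finite B := hB
  calc A.ncard = Nat.card A := (Nat.card_coe_set_eq A).symm
    _ ≤ Nat.card (Fin k → B) := Nat.card_le_card_of_injective
        (fun a i ↦ ⟨f a a.2 i, hfB a a.2 i⟩) fun a b hab ↦ by
          rw [Subtype.ext_iff, ← hf a a.2, ← hf b b.2]
          congr 1
          funext i
          exact congrArg Subtype.val (congrFun hab i)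
    _ = B.ncard ^ k := by simp [Nat.card_fun, Nat.card_coe_set_eq]

section

variable {K V : Type*} [DivisionRing K] [AddCommGroup V] [Module K V]

def IsNondegenerate (m : ℕ) (E : Set (Submodule K V)) : Prop :=
  ∀ T : Submodule K V, finrank K T = finrank K V - m → ∃ W ∈ E, W ⊓ T = ⊥

def intersectionsOfFinrank (d : ℕ) (E₁ E₂ : Set (Submodule K V)) : Set (Submodule K V) :=
  {U | ∃ W₁ ∈ E₁, ∃ W₂ ∈ E₂, finrank K ↥(W₁ ⊓ W₂) = d ∧ U = W₁ ⊓ W₂}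

theorem intersectionsOfFinrank_comm (d : ℕ) (E₁ E₂ : Set (Submodule K V)) :
    intersectionsOfFinrank d E₁ E₂ = intersectionsOfFinrank d E₂ E₁ := by
  ext U
  constructor <;>
  · rintro ⟨W₁, hW₁, W₂, hW₂, hd, rfl⟩
    exact ⟨W₂, hW₂, W₁, hW₁, by rwa [inf_comm], inf_comm _ _⟩

theorem intersectionsOfFinrank_mono_left {d : ℕ} {E₁ E₁' : Set (Submodule K V)} (h : E₁ ⊆ E₁')
    (E₂ : Set (Submodule K V)) : intersectionsOfFinrank d E₁ E₂ ⊆ intersectionsOfFinrank d E₁' E₂ :=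
  fun _ ⟨W₁, hW₁, W₂, hW₂, hd, hU⟩ ↦ ⟨W₁, h hW₁, W₂, hW₂, hd, hU⟩

variable [FiniteDimensional K V]

theorem Submodule.exists_le_le_finrank_eq {X Y : Submodule K V} (hXY : X ≤ Y) {k : ℕ}
    (hXk : finrank K X ≤ k) (hkY : k ≤ finrank K Y) :
    ∃ Z : Submodule K V, X ≤ Z ∧ Z ≤ Y ∧ finrank K Z = k := by
  induction k, hXk using Nat.le_induction with
  | base => exact ⟨X, le_rfl, hXY, rfl⟩
  | succ k _ ih =>
    obtain ⟨Z, hXZ, hZY, rfl⟩ := ih (by omega)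
    obtain ⟨v, hvY, hvZ⟩ := SetLike.exists_of_lt (hZY.lt_of_ne (by rintro rfl; omega))
    refine ⟨K ∙ v ⊔ Z, hXZ.trans le_sup_right,
      sup_le ((span_singleton_le_iff_mem _ _).2 hvY) hZY, le_antisymm ?_
        (finrank_lt_finrank_of_lt (covBy_span_singleton_sup hvZ).lt)⟩
    calc finrank K ↥(K ∙ v ⊔ Z) ≤ finrank K (K ∙ v) + finrank K Z :=
          finrank_add_le_finrank_add_finrank _ _
      _ ≤ finrank K Z + 1 := by
          rw [add_comm]
          gcongr
          simpa using finrank_span_le_card ({v} : Set V)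

theorem Submodule.exists_fin_finrank_iSup_eq_sSup (s : Set (Submodule K V)) :
    ∃ f : Fin (finrank K ↥(sSup s)) → Submodule K V, (∀ i, f i ∈ s) ∧ ⨆ i, f i = sSup s := by
  have hspan : span K (⋃ U ∈ s, (U : Set V)) = sSup s := by
    simp [span_iUnion₂, sSup_eq_iSup]
  rw [← hspan]
  obtain ⟨g, hgs, hg, -⟩ := exists_fun_fin_finrank_span_eq K (⋃ U ∈ s, (U : Set V))
  choose f hfs hgf using fun i ↦ Set.mem_iUnion₂.1 (hgs i)
  refine ⟨f, hfs, le_antisymm (iSup_le fun i ↦ (le_sSup (hfs i)).trans hspan.ge) ?_⟩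
  refine hg.symm.le.trans (span_le.2 ?_)
  rintro _ ⟨i, rfl⟩
  exact mem_iSup_of_mem i (hgf i)

namespace IsNondegenerate

variable {m m₁ m₂ : ℕ} {E E₁ E₂ : Set (Submodule K V)}

theorem exists_inf_disjoint_sup_eq (hE : IsNondegenerate m E)
    (hEdim : ∀ W' ∈ E, finrank K W' = m) {W S : Submodule K V} (hSW : S ≤ W)
    (hS : finrank K S = finrank K V - m) :
    ∃ W' ∈ E, finrank K ↥(W ⊓ W') = finrank K W + m - finrank K V ∧
      Disjoint (W ⊓ W') S ∧ W ⊓ W' ⊔ S = W := by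
  obtain ⟨W', hW'E, hW'S⟩ := hE S hS
  have hdisj : Disjoint (W ⊓ W') S :=
    disjoint_iff.2 (le_bot_iff.1 (hW'S ▸ inf_le_inf_right S inf_le_right))
  have hle : W ⊓ W' ⊔ S ≤ W := sup_le inf_le_left hSW
  have h₁ := finrank_sup_add_finrank_inf_eq (W ⊓ W') S
  have h₂ := finrank_sup_add_finrank_inf_eq W W'
  have := finrank_le (W ⊔ W')
  have := finrank_le W'
  have := finrank_mono hle
  have := finrank_mono hSW
  have := hEdim W' hW'E
  rw [hdisj.eq_bot, finrank_bot] at h₁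
  exact ⟨W', hW'E, by omega, hdisj, eq_of_le_of_finrank_le hle (by omega)⟩

theorem _root_.isNondegenerate_intersectionsOfFinrank (hE₁ : IsNondegenerate m₁ E₁)
    (hE₂ : IsNondegenerate m₂ E₂)
    (hE₁dim : ∀ W ∈ E₁, finrank K W = m₁) (hE₂dim : ∀ W ∈ E₂, finrank K W = m₂)
    (hmn : finrank K V ≤ m₁ + m₂) (hm₂ : m₂ ≤ finrank K V) :
    IsNondegenerate (m₁ + m₂ - finrank K V)
      (intersectionsOfFinrank (m₁ + m₂ - finrank K V) E₁ E₂) := by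
  intro T hT
  obtain ⟨V₁, -, hV₁T, hV₁⟩ :=
    exists_le_le_finrank_eq (bot_le : ⊥ ≤ T) (k := finrank K V - m₁) (by simp) (by omega)
  obtain ⟨W₁, hW₁E, hW₁V₁⟩ := hE₁ V₁ hV₁
  have hW₁ := hE₁dim W₁ hW₁E
  have hW₁T : finrank K ↥(W₁ ⊓ T) ≤ finrank K V - m₂ := by
    have hdisj : (W₁ ⊓ T) ⊓ V₁ = ⊥ := le_bot_iff.1 (hW₁V₁ ▸ inf_le_inf_right V₁ inf_le_left)
    have h := finrank_sup_add_finrank_inf_eq (W₁ ⊓ T) V₁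
    have := finrank_mono (sup_le inf_le_right hV₁T : W₁ ⊓ T ⊔ V₁ ≤ T)
    rw [hdisj, finrank_bot] at h
    omega
  obtain ⟨S, hTS, hSW₁, hS⟩ :=
    exists_le_le_finrank_eq (inf_le_left : W₁ ⊓ T ≤ W₁) hW₁T (by omega)
  obtain ⟨W₂, hW₂E, hdim, hdisj, -⟩ := hE₂.exists_inf_disjoint_sup_eq hE₂dim hSW₁ hS
  refine ⟨W₁ ⊓ W₂, ⟨W₁, hW₁E, W₂, hW₂E, hW₁ ▸ hdim, rfl⟩, le_bot_iff.1 (hdisj inf_le_left ?_)⟩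
  exact (inf_le_inf_right T inf_le_left).trans hTS

theorem nonempty (hE : IsNondegenerate m E) : E.Nonempty := by
  obtain ⟨T, -, -, hT⟩ := exists_le_le_finrank_eq (bot_le : ⊥ ≤ (⊤ : Submodule K V))
    (k := finrank K V - m) (by simp) (by simp)
  obtain ⟨W, hW, -⟩ := hE T hT
  exact ⟨W, hW⟩

theorem sSup_inf_eq (hE : IsNondegenerate m E) (hEdim : ∀ W' ∈ E, finrank K W' = m)
    {W : Submodule K V} (hW : finrank K V < finrank K W + m) :
    sSup (intersectionsOfFinrank (finrank K W + m - finrank K V) {W} E) = W := by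
  set X := sSup (intersectionsOfFinrank (finrank K W + m - finrank K V) {W} E)
  have hXW : X ≤ W := sSup_le (by rintro _ ⟨_, rfl, W', -, -, rfl⟩; exact inf_le_left)
  refine le_antisymm hXW (by_contra fun hWX ↦ ?_)
  have hX := finrank_lt_finrank_of_lt (lt_of_le_not_ge hXW hWX)
  obtain ⟨H, hXH, hHW, hH⟩ :=
    exists_le_le_finrank_eq hXW (k := finrank K W - 1) (by omega) (by omega)
  obtain ⟨S, -, hSH, hS⟩ :=
    exists_le_le_finrank_eq (bot_le : ⊥ ≤ H) (k := finrank K V - m) (by simp) (by omega)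
  obtain ⟨W', hW'E, hdim, -, hsup⟩ := hE.exists_inf_disjoint_sup_eq hEdim (hSH.trans hHW) hS
  have hW'X : W ⊓ W' ≤ X := le_sSup ⟨W, rfl, W', hW'E, hdim, rfl⟩
  have hWH : W ≤ H := hsup ▸ sup_le (hW'X.trans hXH) hSH
  have := finrank_mono hWH
  omega

theorem ncard_le_ncard_intersectionsOfFinrank_pow [Finite V] (hE₂ : IsNondegenerate m₂ E₂)
    (hE₁dim : ∀ W ∈ E₁, finrank K W = m₁) (hE₂dim : ∀ W ∈ E₂, finrank K W = m₂)
    (hmn : finrank K V < m₁ + m₂) :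
    E₁.ncard ≤ (intersectionsOfFinrank (m₁ + m₂ - finrank K V) E₁ E₂).ncard ^ m₁ := by
  refine Set.ncard_le_ncard_pow_of_forall_exists_iSup_eq (Set.toFinite _) fun W hW ↦ ?_
  have hW₁ := hE₁dim W hW
  have hs : sSup (intersectionsOfFinrank (m₁ + m₂ - finrank K V) {W} E₂) = W :=
    hW₁ ▸ hE₂.sSup_inf_eq hE₂dim (by omega)
  have hk : m₁ = finrank K ↥(sSup (intersectionsOfFinrank (m₁ + m₂ - finrank K V) {W} E₂)) := by
    rw [hs, hW₁]
  obtain ⟨f, hf, hsup⟩ :=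
    exists_fin_finrank_iSup_eq_sSup (intersectionsOfFinrank (m₁ + m₂ - finrank K V) {W} E₂)
  refine ⟨f ∘ finCongr hk, fun i ↦ ?_, ((finCongr hk).iSup_comp (g := f)).trans (hsup.trans hs)⟩
  exact intersectionsOfFinrank_mono_left (Set.singleton_subset_iff.2 hW) E₂ (hf _)

end IsNondegenerate

end

theorem stmt6 (p n m₁ m₂ : ℕ) (hp : p.Prime) (hmn : n < m₁ + m₂)
    (hm₁ : m₁ ≤ n) (hm₂ : m₂ ≤ n)
    (E₁ E₂ : Set (Submodule (ZMod p) (Fin n → ZMod p)))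
    (hE₁dim : ∀ W ∈ E₁, Module.finrank (ZMod p) W = m₁)
    (hE₂dim : ∀ W ∈ E₂, Module.finrank (ZMod p) W = m₂)
    (hE₁nd : ∀ V : Submodule (ZMod p) (Fin n → ZMod p),
      Module.finrank (ZMod p) V = n - m₁ → ∃ W ∈ E₁, W ⊓ V = ⊥)
    (hE₂nd : ∀ V : Submodule (ZMod p) (Fin n → ZMod p),
      Module.finrank (ZMod p) V = n - m₂ → ∃ W ∈ E₂, W ⊓ V = ⊥) :
    (∀ V : Submodule (ZMod p) (Fin n → ZMod p),
      Module.finrank (ZMod p) V = n - (m₁ + m₂ - n) →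
      ∃ W₁ ∈ E₁, ∃ W₂ ∈ E₂,
        Module.finrank (ZMod p) ((W₁ ⊓ W₂ : Submodule (ZMod p) (Fin n → ZMod p)))
          = m₁ + m₂ - n ∧ (W₁ ⊓ W₂) ⊓ V = ⊥) ∧
    max E₁.ncard E₂.ncard ≤
      ({U : Submodule (ZMod p) (Fin n → ZMod p) |
        ∃ W₁ ∈ E₁, ∃ W₂ ∈ E₂,
          Module.finrank (ZMod p) ((W₁ ⊓ W₂ : Submodule (ZMod p) (Fin n → ZMod p)))
            = m₁ + m₂ - n ∧ U = W₁ ⊓ W₂}.ncard) ^ n := by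
  have : Fact p.Prime := ⟨hp⟩
  have hrank : finrank (ZMod p) (Fin n → ZMod p) = n := finrank_fin_fun _
  have hE₁ : IsNondegenerate m₁ E₁ := by rwa [IsNondegenerate, hrank]
  have hE₂ : IsNondegenerate m₂ E₂ := by rwa [IsNondegenerate, hrank]
  have hE := isNondegenerate_intersectionsOfFinrank hE₁ hE₂ hE₁dim hE₂dim (by omega) (by omega)
  have hcard₁ := hE₂.ncard_le_ncard_intersectionsOfFinrank_pow hE₁dim hE₂dim (by omega)
  have hcard₂ := hE₁.ncard_le_ncard_intersectionsOfFinrank_pow hE₂dim hE₁dim (by omega)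
  rw [hrank] at hE hcard₁ hcard₂
  rw [add_comm m₂, ← intersectionsOfFinrank_comm] at hcard₂
  have hpos := (Set.ncard_pos (Set.toFinite _)).2 hE.nonempty
  refine ⟨fun T hT ↦ ?_, max_le (hcard₁.trans (Nat.pow_le_pow_right hpos hm₁))
    (hcard₂.trans (Nat.pow_le_pow_right hpos hm₂))⟩
  obtain ⟨_, ⟨W₁, hW₁, W₂, hW₂, hdim, rfl⟩, hW₁₂T⟩ := hE T (by rwa [hrank])
  exact ⟨W₁, hW₁, W₂, hW₂, hdim, hW₁₂T⟩
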